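/- Let 1 ≤ k ≤ N and let Λ be either Λᵃ(kπh) or Λᵒ(kπh), with φ the corresponding eigenvector (φ_j = sin(kπx_j), φ_{j+1/2} = ((40+Λ)/(8(10−Λ)))·(φ_j + φ_{j+1})). Then its discrete L²-norm satisfies ‖φ‖²_{h,0} = 1/(3·W̃(Λ)). -/

import Mathlib

open Real Finset

noncomputable def Delta (η : ℝ) : ℝ :=
  1 + 268 * Real.cos (η / 2) ^ 2 - 44 * Real.cos (η / 2) ^ 4

noncomputable def Lama (η : ℝ) : ℝ :=
  120 * Real.sin (η / 2) ^ 2 / (11 + 4 * Real.cos (η / 2) ^ 2 + Real.sqrt (Delta η))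

noncomputable def Lamo (η : ℝ) : ℝ :=
  (22 + 8 * Real.cos (η / 2) ^ 2 + 2 * Real.sqrt (Delta η)) / (1 + Real.sin (η / 2) ^ 2)

noncomputable def Wtilde (Λ : ℝ) : ℝ :=
  (Λ - 10) * (Λ ^ 2 + 16 * Λ + 240) / (19 * Λ ^ 2 + 120 * Λ - 3600)

/-- Discrete L²-norm squared of a P2 vector with nodal components `f`
and midpoint components `g`. -/
noncomputable def normH0sq (N : ℕ) (h : ℝ) (f g : ℕ → ℝ) : ℝ :=
  (h / 90) * ∑ j ∈ Finset.range (N + 1),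
    (7 * (f j) ^ 2
      + 32 * ((3 / 8) * f j + (3 / 4) * g j - (1 / 8) * f (j + 1)) ^ 2
      + 12 * (g j) ^ 2
      + 32 * (-(1 / 8) * f j + (3 / 4) * g j + (3 / 8) * f (j + 1)) ^ 2
      + 7 * (f (j + 1)) ^ 2)


/-
Once the midpoint value is `a (φ_j + φ_{j+1})`, the quadrature on each cell is a quadratic form
`A (φ_j² + φ_{j+1}²) + B φ_j φ_{j+1}` in the nodal values. For the sine mode `φ_j = sin (j η)`,
`η = kπh`, discrete orthogonality gives `∑ φ_j² = ∑ φ_{j+1}² = (N+1)/2` and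
`∑ φ_j φ_{j+1} = (N+1) cos η / 2`, so the norm is `(2A + B cos η) / 180`. Both eigenvalue branches
satisfy the dispersion relation `(1 + cos η)(Λ² + 16Λ + 240) = 4(Λ - 10)(Λ - 12)`, which
eliminates `cos η` and leaves a rational function of `Λ`, namely `1 / (3 W̃(Λ))`.
-/

/- `2 sin e cos (2je + a)` telescopes, and `sin (M e) = 0` gives `sin (2Me + x) = sin x`. -/
lemma sum_range_cos_two_mul_add {M : ℕ} {e : ℝ} (hMe : sin (M * e) = 0) (he : sin e ≠ 0)
    (a : ℝ) : ∑ j ∈ range M, cos (2 * j * e + a) = 0 := by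
  have hstep : ∀ j : ℕ, sin ((2 * ((j + 1 : ℕ) : ℝ) - 1) * e + a) - sin ((2 * j - 1) * e + a)
      = 2 * sin e * cos (2 * j * e + a) := by
    intro j
    rw [Real.sin_sub_sin]
    push_cast
    ring_nf
  have hperiod : sin ((2 * (M : ℝ) - 1) * e + a) = sin ((2 * ((0 : ℕ) : ℝ) - 1) * e + a) := by
    have h2M : sin (2 * (M * e)) = 0 := by rw [sin_two_mul, hMe, mul_zero, zero_mul]
    have h2M' : cos (2 * (M * e)) = 1 := by
      rw [cos_two_mul]; nlinarith [sin_sq_add_cos_sq (M * e)]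
    rw [show (2 * (M : ℝ) - 1) * e + a = 2 * (M * e) + ((2 * ((0 : ℕ) : ℝ) - 1) * e + a) by
      push_cast; ring, sin_add, h2M, h2M']
    ring
  have htele := sum_range_sub (fun j : ℕ => sin ((2 * (j : ℝ) - 1) * e + a)) M
  simp only [hstep, hperiod, sub_self, ← mul_sum] at htele
  exact (mul_eq_zero.mp htele).resolve_left (mul_ne_zero two_ne_zero he)

lemma sum_range_sin_mul_sin {M : ℕ} {e : ℝ} (hMe : sin (M * e) = 0) (he : sin e ≠ 0)
    (p q : ℝ) : ∑ j ∈ range M, sin (j * e + p) * sin (j * e + q) = M * cos (p - q) / 2 := by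
  have hprod : ∀ j : ℕ, sin (j * e + p) * sin (j * e + q)
      = cos (p - q) / 2 - cos (2 * j * e + (p + q)) / 2 := by
    intro j
    have := two_mul_sin_mul_sin (j * e + p) (j * e + q)
    rw [show j * e + p - (j * e + q) = p - q by ring,
      show j * e + p + (j * e + q) = 2 * j * e + (p + q) by ring] at this
    linarith
  rw [sum_congr rfl fun j _ => hprod j, sum_sub_distrib, ← sum_div, ← sum_div,
    sum_range_cos_two_mul_add hMe he, sum_const, card_range, nsmul_eq_mul, zero_div, sub_zero]

lemma sum_range_sin_quadratic_form {M : ℕ} {e : ℝ} (hMe : sin (M * e) = 0) (he : sin e ≠ 0)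
    (A B : ℝ) :
    ∑ j ∈ range M,
        (A * (sin (j * e) ^ 2 + sin ((j + 1) * e) ^ 2) + B * (sin (j * e) * sin ((j + 1) * e)))
      = M * (2 * A + B * cos e) / 2 := by
  have h00 := sum_range_sin_mul_sin hMe he 0 0
  have h0e := sum_range_sin_mul_sin hMe he 0 e
  have hee := sum_range_sin_mul_sin hMe he e e
  simp only [add_zero] at h00 h0e
  have hsucc : ∀ j : ℕ, ((j : ℝ) + 1) * e = j * e + e := fun j => by ring
  simp only [hsucc, sq, mul_add, sum_add_distrib, ← mul_sum, h00, h0e, hee, sub_self, zero_sub,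
    cos_neg, cos_zero]
  ring

lemma p2_cell_eq_of_midpoint (a x y : ℝ) :
    7 * x ^ 2 + 32 * ((3 / 8) * x + (3 / 4) * (a * (x + y)) - (1 / 8) * y) ^ 2
      + 12 * (a * (x + y)) ^ 2 + 32 * (-(1 / 8) * x + (3 / 4) * (a * (x + y)) + (3 / 8) * y) ^ 2
      + 7 * y ^ 2
      = (12 + 12 * a + 48 * a ^ 2) * (x ^ 2 + y ^ 2) + (-6 + 24 * a + 96 * a ^ 2) * (x * y) := by
  ring

lemma normH0sq_eq_of_midpoint {N : ℕ} {h a : ℝ} {f g : ℕ → ℝ}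
    (hg : ∀ j, g j = a * (f j + f (j + 1))) :
    normH0sq N h f g = h / 90 * ∑ j ∈ range (N + 1),
      ((12 + 12 * a + 48 * a ^ 2) * (f j ^ 2 + f (j + 1) ^ 2)
        + (-6 + 24 * a + 96 * a ^ 2) * (f j * f (j + 1))) := by
  simp only [normH0sq, hg, p2_cell_eq_of_midpoint]

lemma Delta_nonneg (η : ℝ) : 0 ≤ Delta η := by
  have := cos_sq_le_one (η / 2)
  unfold Delta
  nlinarith [sq_nonneg (cos (η / 2))]

lemma two_sub_cos_sq_mul_Lama (η : ℝ) :
    (2 - cos (η / 2) ^ 2) * Lama η = 22 + 8 * cos (η / 2) ^ 2 - 2 * √(Delta η) := by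
  have hr := Real.sq_sqrt (Delta_nonneg η)
  have hsc := sin_sq_add_cos_sq (η / 2)
  have hD : 0 < 11 + 4 * cos (η / 2) ^ 2 + √(Delta η) := by positivity
  unfold Lama
  rw [mul_div_assoc', div_eq_iff hD.ne']
  unfold Delta at hr ⊢
  linear_combination 120 * (2 - cos (η / 2) ^ 2) * hsc + 2 * hr

lemma two_sub_cos_sq_mul_Lamo (η : ℝ) :
    (2 - cos (η / 2) ^ 2) * Lamo η = 22 + 8 * cos (η / 2) ^ 2 + 2 * √(Delta η) := by
  have hsc := sin_sq_add_cos_sq (η / 2)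
  have hD : 0 < 1 + sin (η / 2) ^ 2 := by positivity
  unfold Lamo
  rw [mul_div_assoc', div_eq_iff hD.ne']
  linear_combination -(22 + 8 * cos (η / 2) ^ 2 + 2 * √(Delta η)) * hsc

lemma one_add_cos_mul_eq_of_Lama_or_Lamo {η Λ : ℝ} (hΛ : Λ = Lama η ∨ Λ = Lamo η) :
    (1 + cos η) * (Λ ^ 2 + 16 * Λ + 240) = 4 * (Λ - 10) * (Λ - 12) := by
  have hr := Real.sq_sqrt (Delta_nonneg η)
  have hlin :
      ((2 - cos (η / 2) ^ 2) * Λ - (22 + 8 * cos (η / 2) ^ 2)) ^ 2 = 4 * √(Delta η) ^ 2 := by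
    rcases hΛ with rfl | rfl
    · rw [two_sub_cos_sq_mul_Lama]; ring
    · rw [two_sub_cos_sq_mul_Lamo]; ring
  have hcos : cos η = 2 * cos (η / 2) ^ 2 - 1 := by
    rw [← cos_two_mul, mul_div_cancel₀ η two_ne_zero]
  have h2c : 2 - cos (η / 2) ^ 2 ≠ 0 := by nlinarith [cos_sq_le_one (η / 2)]
  refine mul_left_cancel₀ h2c ?_
  rw [hcos]
  unfold Delta at hr hlin
  linear_combination -2 * hlin - 8 * hr

lemma Lama_nonneg (η : ℝ) : 0 ≤ Lama η := by unfold Lama; positivity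

lemma Lamo_nonneg (η : ℝ) : 0 ≤ Lamo η := by unfold Lamo; positivity

lemma p2_norm_coeff_eq_one_div_Wtilde {Λ C a : ℝ} (hΛ : 0 ≤ Λ) (hC : -1 < C)
    (hdisp : (1 + C) * (Λ ^ 2 + 16 * Λ + 240) = 4 * (Λ - 10) * (Λ - 12))
    (ha : a = (40 + Λ) / (8 * (10 - Λ))) :
    (2 * (12 + 12 * a + 48 * a ^ 2) + (-6 + 24 * a + 96 * a ^ 2) * C) / 180
      = 1 / (3 * Wtilde Λ) := by
  have hQ : 0 < Λ ^ 2 + 16 * Λ + 240 := by nlinarith [sq_nonneg (Λ + 8)]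
  have hgap : 0 < (Λ - 10) * (Λ - 12) := by nlinarith [mul_pos (neg_lt_iff_pos_add'.mp hC) hQ]
  have h10 : Λ - 10 ≠ 0 := by
    intro h0
    rw [h0, zero_mul] at hgap
    exact lt_irrefl 0 hgap
  have h10' : 10 - Λ ≠ 0 := by rw [← neg_sub]; exact neg_ne_zero.mpr h10
  -- the positive root of `19Λ² + 120Λ - 3600` lies in `(10, 12)`
  have hden : 19 * Λ ^ 2 + 120 * Λ - 3600 ≠ 0 := by
    intro h0; nlinarith
  have hC' : C = 4 * (Λ - 10) * (Λ - 12) / (Λ ^ 2 + 16 * Λ + 240) - 1 := by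
    rw [eq_sub_iff_add_eq, eq_div_iff hQ.ne']
    linear_combination hdisp
  rw [ha, hC', Wtilde]
  field_simp
  ring

theorem stmt_10_general (N : ℕ) (h : ℝ) (hh : h = 1 / ((N : ℝ) + 1))
    (k : ℕ) (hk1 : 1 ≤ k) (hkN : k ≤ N)
    (Λ : ℝ) (hΛ : Λ = Lama ((k : ℝ) * Real.pi * h) ∨ Λ = Lamo ((k : ℝ) * Real.pi * h))
    (φ : ℕ → ℝ) (hφ : ∀ j : ℕ, φ j = Real.sin ((k : ℝ) * Real.pi * ((j : ℝ) * h)))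
    (ψ : ℕ → ℝ)
    (hψ : ∀ j : ℕ, ψ j = (40 + Λ) / (8 * (10 - Λ)) * (φ j + φ (j + 1))) :
    normH0sq N h φ ψ = 1 / (3 * Wtilde Λ) := by
  set e := (k : ℝ) * π * h with he_def
  have hM : ((N + 1 : ℕ) : ℝ) * h = 1 := by rw [hh]; push_cast; field_simp
  have he_pos : 0 < e := by
    have hk : (0 : ℝ) < k := by exact_mod_cast hk1
    rw [he_def, hh]; positivity
  have he_lt : e < π := by
    have hkN' : (k : ℝ) < N + 1 := by exact_mod_cast Nat.lt_succ_of_le hkN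
    rw [he_def, hh, mul_one_div, div_lt_iff₀ (by positivity)]
    nlinarith [pi_pos]
  have hMe : sin ((N + 1 : ℕ) * e) = 0 := by
    rw [show ((N + 1 : ℕ) : ℝ) * e = k * π by
      rw [he_def]; linear_combination (k * π) * hM]
    exact sin_nat_mul_pi k
  have hcos : -1 < cos e := by
    simpa using cos_lt_cos_of_nonneg_of_le_pi he_pos.le le_rfl he_lt
  have hφe : ∀ j : ℕ, φ j = sin (j * e) := fun j => by rw [hφ, he_def]; congr 1; ring
  set a := (40 + Λ) / (8 * (10 - Λ)) with ha
  rw [normH0sq_eq_of_midpoint hψ]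
  simp only [hφe, Nat.cast_add, Nat.cast_one]
  rw [sum_range_sin_quadratic_form hMe (sin_pos_of_pos_of_lt_pi he_pos he_lt).ne',
    ← p2_norm_coeff_eq_one_div_Wtilde (hΛ.elim (· ▸ Lama_nonneg _) (· ▸ Lamo_nonneg _)) hcos
      (one_add_cos_mul_eq_of_Lama_or_Lamo hΛ) ha]
  linear_combination
    (2 * (12 + 12 * a + 48 * a ^ 2) + (-6 + 24 * a + 96 * a ^ 2) * cos e) / 180 * hM

theorem stmt_10 (N : ℕ) (hN : 1 ≤ N) (h : ℝ) (hh : h = 1 / ((N : ℝ) + 1))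
    (k : ℕ) (hk1 : 1 ≤ k) (hkN : k ≤ N)
    (Λ : ℝ) (hΛ : Λ = Lama ((k : ℝ) * Real.pi * h) ∨ Λ = Lamo ((k : ℝ) * Real.pi * h))
    (φ : ℕ → ℝ) (hφ : ∀ j : ℕ, φ j = Real.sin ((k : ℝ) * Real.pi * ((j : ℝ) * h)))
    (ψ : ℕ → ℝ)
    (hψ : ∀ j : ℕ, ψ j = (40 + Λ) / (8 * (10 - Λ)) * (φ j + φ (j + 1))) :
    normH0sq N h φ ψ = 1 / (3 * Wtilde Λ) :=
  stmt_10_general N h hh k hk1 hkN Λ hΛ φ hφ ψ hψ
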